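/- Let M be a topological space with basepoint x₀, let x₁ ∈ M, fix 0 < ε < 1/6, and let φ : [0,1] × M → M be a continuous map such that φ(0,·) = id_M and φ(s,·) : M → M is a homeomorphism for every s ∈ [0,1]. Set x₂ := φ(1,x₁) and let τ : [0,1] → M be the path τ(t) = φ(t,x₁). Let χ : [0,1] → [0,1] be the piecewise linear map with χ(0) = χ(1) = 0, χ ≡ 1 on [ε,1−ε], and χ linear on [0,ε] and on [1−ε,1]. For x ∈ M write 𝓕_x := {γ ∈ ΩM : γ(1/2) = x}. Then the map Φ : 𝓕_{x₁} → 𝓕_{x₂} given by Φ(γ)(t) = φ(χ(t), γ(t)) is well defined and continuous, and Φ is homotopic, through maps 𝓕_{x₁} → 𝓕_{x₂}, to the map sending γ to the loop t ↦ γ(2t) for t ∈ [0,1/4], t ↦ τ(4t−1) for t ∈ [1/4,1/2], t ↦ τ(3−4t) for t ∈ [1/2,3/4], and t ↦ γ(2t−1) for t ∈ [3/4,1] (i.e., to γ|_{[0,1/2]}·τ·τ̄·γ|_{[1/2,1]}). -/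
import Mathlib

open Set

/-- The based loop space of `M` at `x₀`: continuous maps `[0,1] → M` sending both
endpoints to `x₀`, with the compact-open topology. -/
abbrev OmegaLoop (M : Type*) [TopologicalSpace M] (x₀ : M) : Type _ :=
  {γ : C(unitInterval, M) // γ 0 = x₀ ∧ γ 1 = x₀}

/-- The midpoint `1/2` of the unit interval. -/
noncomputable def half : unitInterval := ⟨1/2, by norm_num⟩

/-- The subspace `𝓕_x = {γ ∈ ΩM : γ(1/2) = x}`. -/
abbrev FiberLoop (M : Type*) [TopologicalSpace M] (x₀ x : M) : Type _ :=
  {γ : OmegaLoop M x₀ // γ.1 half = x}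

noncomputable def chiAux (ε t : ℝ) : ℝ := min (t/ε) (min 1 ((1-t)/ε))
noncomputable def aOne (t : ℝ) : ℝ := max 0 (min (4*t-1) (3-4*t))
noncomputable def bOne (t : ℝ) : ℝ := min (2*t) (max (1/2) (2*t-1))
noncomputable def Afun (ε s t : ℝ) : ℝ := (1-s) * chiAux ε t + s * aOne t
noncomputable def Bfun (s t : ℝ) : ℝ := (1-s) * t + s * bOne t

lemma continuous_chiAux (ε : ℝ) : Continuous (chiAux ε) := by
  unfold chiAux; fun_prop

lemma continuous_aOne : Continuous aOne := by unfold aOne; fun_prop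
lemma continuous_bOne : Continuous bOne := by unfold bOne; fun_prop

noncomputable def pj (x : ℝ) : unitInterval := projIcc 0 1 zero_le_one x

lemma pj_zero : pj 0 = 0 := by
  rw [pj, projIcc_left]; rfl
lemma pj_one : pj 1 = 1 := by
  rw [pj, projIcc_right]; rfl
lemma pj_half : pj (1/2) = half := by
  rw [pj, projIcc_of_mem zero_le_one (by norm_num)]; rfl
lemma pj_coe (t : unitInterval) : pj (t : ℝ) = t := projIcc_val zero_le_one t

section vals
variable {ε s t : ℝ}

lemma chiAux_zero (hε0 : 0 < ε) : chiAux ε 0 = 0 := by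
  unfold chiAux
  rw [zero_div, min_eq_left (le_min zero_le_one (by positivity))]

lemma chiAux_one (hε0 : 0 < ε) : chiAux ε 1 = 0 := by
  unfold chiAux
  rw [sub_self, zero_div, min_eq_right, min_eq_right zero_le_one]
  exact le_trans (min_le_right _ _) (by positivity)

lemma chiAux_half (hε0 : 0 < ε) (hε : ε < 1/2) : chiAux ε (1/2) = 1 := by
  unfold chiAux
  have h : 1 ≤ (1/2 : ℝ)/ε := by rw [le_div_iff₀ hε0]; linarith
  rw [show (1 : ℝ) - 1/2 = 1/2 by norm_num, min_eq_left h, min_eq_right h]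

lemma Afun_t0 (hε0 : 0 < ε) : Afun ε s 0 = 0 := by
  simp [Afun, chiAux_zero hε0, aOne]
lemma Afun_t1 (hε0 : 0 < ε) : Afun ε s 1 = 0 := by
  have : aOne 1 = 0 := by unfold aOne; rw [max_eq_left]; norm_num
  simp [Afun, chiAux_one hε0, this]
lemma Afun_thalf (hε0 : 0 < ε) (hε : ε < 1/2) : Afun ε s (1/2) = 1 := by
  have ha : aOne (1/2) = 1 := by unfold aOne; norm_num
  rw [Afun, chiAux_half hε0 hε, ha]; ring
lemma Bfun_t0 : Bfun s 0 = 0 := by simp [Bfun, bOne]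
lemma Bfun_t1 : Bfun s 1 = 1 := by
  have : bOne 1 = 1 := by unfold bOne; norm_num
  rw [Bfun, this]; ring
lemma Bfun_thalf : Bfun s (1/2) = 1/2 := by
  have : bOne (1/2) = 1/2 := by unfold bOne; norm_num
  rw [Bfun, this]; ring

lemma Afun_s0 : Afun ε 0 t = chiAux ε t := by simp [Afun]
lemma Afun_s1 : Afun ε 1 t = aOne t := by simp [Afun]
lemma Bfun_s0 : Bfun 0 t = t := by simp [Bfun]
lemma Bfun_s1 : Bfun 1 t = bOne t := by simp [Bfun]

lemma aOne_piece1 (h : t ≤ 1/4) : aOne t = 0 := by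
  unfold aOne
  rw [max_eq_left]
  exact le_trans (min_le_left _ _) (by linarith)
lemma aOne_piece2 (h1 : 1/4 ≤ t) (h2 : t ≤ 1/2) : aOne t = 4*t - 1 := by
  unfold aOne
  rw [min_eq_left (by linarith), max_eq_right (by linarith)]
lemma aOne_piece3 (h1 : 1/2 ≤ t) (h2 : t ≤ 3/4) : aOne t = 3 - 4*t := by
  unfold aOne
  rw [min_eq_right (by linarith), max_eq_right (by linarith)]
lemma aOne_piece4 (h : 3/4 ≤ t) : aOne t = 0 := by
  unfold aOne
  rw [max_eq_left]
  exact le_trans (min_le_right _ _) (by linarith)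
lemma bOne_piece1 (h : t ≤ 1/4) : bOne t = 2*t := by
  unfold bOne
  rw [min_eq_left (le_trans (by linarith) (le_max_left _ _))]
lemma bOne_piece23 (h1 : 1/4 ≤ t) (h2 : t ≤ 3/4) : bOne t = 1/2 := by
  unfold bOne
  rw [max_eq_left (by linarith), min_eq_right (by linarith)]
lemma bOne_piece4 (h : 3/4 ≤ t) : bOne t = 2*t - 1 := by
  unfold bOne
  rw [max_eq_right (by linarith), min_eq_right (by linarith)]

end vals

lemma chiAux_eq_chi {ε : ℝ} (hε0 : 0 < ε) (hε : ε < 1/2) (χ : ℝ → ℝ)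
    (hχleft : ∀ t ∈ Icc (0 : ℝ) ε, χ t = t / ε)
    (hχmid : ∀ t ∈ Icc ε (1 - ε), χ t = 1)
    (hχright : ∀ t ∈ Icc (1 - ε) (1 : ℝ), χ t = (1 - t) / ε)
    {t : ℝ} (ht : t ∈ Icc (0:ℝ) 1) : chiAux ε t = χ t := by
  obtain ⟨ht0, ht1⟩ := ht
  unfold chiAux
  rcases le_or_gt t ε with h | h
  · rw [hχleft t ⟨ht0, h⟩]
    exact min_eq_left (le_min (by rw [div_le_one hε0]; linarith)
      ((div_le_div_iff_of_pos_right hε0).mpr (by linarith)))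
  · rcases le_or_gt t (1-ε) with h2 | h2
    · rw [hχmid t ⟨h.le, h2⟩,
        min_eq_left (show (1:ℝ) ≤ (1-t)/ε by rw [le_div_iff₀ hε0]; linarith)]
      exact min_eq_right (by rw [le_div_iff₀ hε0]; linarith)
    · rw [hχright t ⟨h2.le, ht1⟩,
        min_eq_right (show (1-t)/ε ≤ (1:ℝ) by rw [div_le_one hε0]; linarith)]
      exact min_eq_right ((div_le_div_iff_of_pos_right hε0).mpr (by linarith))

theorem phi_homotopic_to_conjugation
    {M : Type*} [TopologicalSpace M] (x₀ x₁ : M) (ε : ℝ) (hε0 : 0 < ε) (hε : ε < 1/6)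
    (φ : C(unitInterval × M, M))
    (hφ0 : ∀ x : M, φ (0, x) = x)
    (hφh : ∀ s : unitInterval, IsHomeomorph fun x : M => φ (s, x))
    (χ : ℝ → ℝ)
    (hχ0 : χ 0 = 0) (hχ1 : χ 1 = 0)
    (hχleft : ∀ t ∈ Icc (0 : ℝ) ε, χ t = t / ε)
    (hχmid : ∀ t ∈ Icc ε (1 - ε), χ t = 1)
    (hχright : ∀ t ∈ Icc (1 - ε) (1 : ℝ), χ t = (1 - t) / ε) :
    ∃ Φ Ψ : C(FiberLoop M x₀ x₁, FiberLoop M x₀ (φ (1, x₁))),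
      (∀ (γ : FiberLoop M x₀ x₁) (t : unitInterval),
        (Φ γ).1.1 t = φ (projIcc 0 1 zero_le_one (χ t), γ.1.1 t)) ∧
      (∀ (γ : FiberLoop M x₀ x₁) (t : unitInterval),
        ((t : ℝ) ≤ 1/4 → (Ψ γ).1.1 t = γ.1.1 (projIcc 0 1 zero_le_one (2 * (t : ℝ)))) ∧
        (1/4 ≤ (t : ℝ) → (t : ℝ) ≤ 1/2 →
          (Ψ γ).1.1 t = φ (projIcc 0 1 zero_le_one (4 * (t : ℝ) - 1), x₁)) ∧
        (1/2 ≤ (t : ℝ) → (t : ℝ) ≤ 3/4 →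
          (Ψ γ).1.1 t = φ (projIcc 0 1 zero_le_one (3 - 4 * (t : ℝ)), x₁)) ∧
        (3/4 ≤ (t : ℝ) →
          (Ψ γ).1.1 t = γ.1.1 (projIcc 0 1 zero_le_one (2 * (t : ℝ) - 1)))) ∧
      Φ.Homotopic Ψ := by
  have hε2 : ε < 1/2 := by linarith
  classical
  -- the big continuous map
  set Fib := FiberLoop M x₀ x₁ with hFib
  have hcore : Continuous fun p : (unitInterval × Fib) × unitInterval =>
      φ (pj (Afun ε p.1.1 p.2), p.1.2.1.1 (pj (Bfun p.1.1 p.2))) := by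
    apply φ.continuous.comp
    apply Continuous.prodMk
    · apply (continuous_projIcc).comp
      unfold Afun
      have := continuous_chiAux ε
      have := continuous_aOne
      fun_prop
    · have heval : Continuous fun q : C(unitInterval, M) × unitInterval => q.1 q.2 :=
        continuous_eval
      have h1 : Continuous fun x : (unitInterval × Fib) × unitInterval =>
          (x.1.2.1.1 : C(unitInterval, M)) :=
        continuous_subtype_val.comp
          (continuous_subtype_val.comp (continuous_snd.comp continuous_fst))
      have h2 : Continuous fun x : (unitInterval × Fib) × unitInterval =>
          pj (Bfun (x.1.1 : ℝ) (x.2 : ℝ)) := by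
        apply continuous_projIcc.comp
        unfold Bfun
        have := continuous_bOne
        fun_prop
      exact heval.comp (h1.prodMk h2)
  set K : C((unitInterval × Fib) × unitInterval, M) := ⟨_, hcore⟩ with hK
  have hmem : ∀ p : unitInterval × Fib,
      (K.curry p) 0 = x₀ ∧ (K.curry p) 1 = x₀ ∧ (K.curry p) half = φ (1, x₁) := by
    rintro ⟨s, γ⟩
    have e0 : (K.curry (s, γ)) 0 =
        φ (pj (Afun ε s ((0:unitInterval):ℝ)), γ.1.1 (pj (Bfun s ((0:unitInterval):ℝ)))) := rfl
    have e1 : (K.curry (s, γ)) 1 =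
        φ (pj (Afun ε s ((1:unitInterval):ℝ)), γ.1.1 (pj (Bfun s ((1:unitInterval):ℝ)))) := rfl
    have eh : (K.curry (s, γ)) half =
        φ (pj (Afun ε s ((half:unitInterval):ℝ)), γ.1.1 (pj (Bfun s ((half:unitInterval):ℝ)))) := rfl
    refine ⟨?_, ?_, ?_⟩
    · rw [e0]
      simp only [Set.Icc.coe_zero, Afun_t0 hε0, Bfun_t0, pj_zero, pj_one]
      rw [hφ0, γ.1.2.1]
    · rw [e1]
      simp only [Set.Icc.coe_one, Afun_t1 hε0, Bfun_t1, pj_zero, pj_one]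
      rw [hφ0, γ.1.2.2]
    · rw [eh]
      have hc : ((half : unitInterval) : ℝ) = 1/2 := rfl
      rw [hc, Afun_thalf hε0 hε2, Bfun_thalf, pj_one, pj_half, γ.2]
  set H : C(unitInterval × Fib, FiberLoop M x₀ (φ (1, x₁))) :=
    ⟨fun p => ⟨⟨K.curry p, (hmem p).1, (hmem p).2.1⟩, (hmem p).2.2⟩, by
      apply Continuous.subtype_mk
      apply Continuous.subtype_mk
      exact K.curry.continuous⟩ with hH
  refine ⟨H.curry 0, H.curry 1, ?_, ?_, ⟨⟨H, fun γ => rfl, fun γ => rfl⟩⟩⟩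
  · intro γ t
    have e : (H.curry 0 γ).1.1 t =
        φ (pj (Afun ε ((0:unitInterval):ℝ) t), γ.1.1 (pj (Bfun ((0:unitInterval):ℝ) t))) := rfl
    rw [e]
    simp only [Set.Icc.coe_zero, Afun_s0, Bfun_s0, pj_coe]
    rw [chiAux_eq_chi hε0 hε2 χ hχleft hχmid hχright t.2]
    rfl
  · intro γ t
    have e : (H.curry 1 γ).1.1 t =
        φ (pj (Afun ε ((1:unitInterval):ℝ) t), γ.1.1 (pj (Bfun ((1:unitInterval):ℝ) t))) := rfl
    have e' : (H.curry 1 γ).1.1 t = φ (pj (aOne t), γ.1.1 (pj (bOne t))) := by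
      rw [e]; simp only [Set.Icc.coe_one, Afun_s1, Bfun_s1]
    refine ⟨?_, ?_, ?_, ?_⟩
    · intro h
      rw [e', aOne_piece1 h, bOne_piece1 h, pj_zero, hφ0]
      rfl
    · intro h1 h2
      rw [e', aOne_piece2 h1 h2, bOne_piece23 h1 (by linarith), pj_half, γ.2]
      rfl
    · intro h1 h2
      rw [e', aOne_piece3 h1 h2, bOne_piece23 (by linarith) h2, pj_half, γ.2]
      rfl
    · intro h
      rw [e', aOne_piece4 h, bOne_piece4 h, pj_zero, hφ0]
      rfl
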